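/- The family F_{(R₀,Ω₀^×)}((Q,q),(π^×,θ^×)) = ( (Ω₀+q)^× Q + (Qπ)^× Q , (Qπ)^×(Ω₀+q) + Qθ ) is a lift of the second order attitude kinematics: the pushforward of F under the differential of φ_{(R₀,Ω₀^×)} at (Q,q) equals f(φ((Q,q),(R₀,Ω₀^×)), (π^×,θ^×)) = ( R₀Q(Qᵀ(Ω₀+q)+π)^× , θ^× ). -/

import Mathlib

/-!
The hat map is equivariant under rotations: `Aᵀ (Av)^× A = (det A) v^×` for every `3 × 3` matrix `A`,
so `(Qv)^× Q = Q v^×` for `Q ∈ SO(3)`, which rewrites the first component into `R₀Q(Qᵀ(Ω₀+q)+π)^×`.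
In the second component, skew-symmetry of `v^×` and `v^× v = 0` cancel everything but `QᵀQθ = θ`.
-/

open Matrix

noncomputable section

abbrev Mat3 := Matrix (Fin 3) (Fin 3) ℝ
abbrev Vec3 := Fin 3 → ℝ

/-- `Q` is a rotation matrix: orthogonal with determinant 1. -/
def IsSO3 (Q : Mat3) : Prop := Qᵀ * Q = 1 ∧ Q.det = 1

/-- skew-symmetric matrix `v^×` of a vector. -/
def hat (v : Vec3) : Mat3 := !![0, -v 2, v 1; v 2, 0, -v 0; -v 1, v 0, 0]

/-- inverse of `hat` on skew-symmetric matrices. -/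
def vee (W : Mat3) : Vec3 := ![W 2 1, W 0 2, W 1 0]

/-- cross product on ℝ³. -/
def cross (u v : Vec3) : Vec3 :=
  ![u 1 * v 2 - u 2 * v 1, u 2 * v 0 - u 0 * v 2, u 0 * v 1 - u 1 * v 0]

/-- semidirect product on SE(3): (A,a)·(B,b) = (AB, a + Ab). -/
def semul (X Y : Mat3 × Vec3) : Mat3 × Vec3 := (X.1 * Y.1, X.2 + X.1 *ᵥ Y.2)

lemma hat_add (u v : Vec3) : hat (u + v) = hat u + hat v := by
  ext i j; fin_cases i <;> fin_cases j <;> simp [hat] <;> ring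

lemma hat_transpose (v : Vec3) : (hat v)ᵀ = -hat v := by
  ext i j; fin_cases i <;> fin_cases j <;> simp [hat]

lemma hat_mulVec_self (v : Vec3) : hat v *ᵥ v = 0 := by
  funext i; fin_cases i <;> simp [hat, mulVec, dotProduct, Fin.sum_univ_three] <;> ring

lemma transpose_mul_hat_mulVec_mul (A : Mat3) (v : Vec3) :
    Aᵀ * hat (A *ᵥ v) * A = A.det • hat v := by
  ext i j; fin_cases i <;> fin_cases j <;>
    simp [hat, mul_apply, mulVec, dotProduct, Fin.sum_univ_three, det_fin_three] <;> ring

lemma hat_mulVec_mul_of_isSO3 {Q : Mat3} (hQ : IsSO3 Q) (v : Vec3) :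
    hat (Q *ᵥ v) * Q = Q * hat v := by
  have hQQt : Q * Qᵀ = 1 := mul_eq_one_comm.mp hQ.1
  calc hat (Q *ᵥ v) * Q = Q * (Qᵀ * hat (Q *ᵥ v) * Q) := by
        rw [← Matrix.mul_assoc, ← Matrix.mul_assoc, hQQt, Matrix.one_mul]
    _ = Q * hat v := by rw [transpose_mul_hat_mulVec_mul, hQ.2, one_smul]

lemma hat_mul_transpose_mulVec (u w : Vec3) (M : Mat3) :
    (hat u * M)ᵀ *ᵥ w = -(Mᵀ *ᵥ (hat u *ᵥ w)) := by
  rw [transpose_mul, hat_transpose, Matrix.mul_neg, neg_mulVec, mulVec_mulVec]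

lemma mul_hat_transpose_mulVec_add_of_isSO3 {Q : Mat3} (hQ : IsSO3 Q) (w π : Vec3) :
    Q * hat (Qᵀ *ᵥ w + π) = hat w * Q + hat (Q *ᵥ π) * Q := by
  have hQQt : Q * Qᵀ = 1 := mul_eq_one_comm.mp hQ.1
  rw [hat_add, Matrix.mul_add, ← hat_mulVec_mul_of_isSO3 hQ, ← hat_mulVec_mul_of_isSO3 hQ,
    mulVec_mulVec, hQQt, one_mulVec]

lemma hat_mul_add_transpose_mulVec_add {Q : Mat3} (hQ : Qᵀ * Q = 1) (w π θ : Vec3) :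
    (hat w * Q + hat (Q *ᵥ π) * Q)ᵀ *ᵥ w + Qᵀ *ᵥ (hat (Q *ᵥ π) *ᵥ w + Q *ᵥ θ) = θ := by
  rw [transpose_add, add_mulVec, hat_mul_transpose_mulVec, hat_mul_transpose_mulVec,
    hat_mulVec_self, mulVec_add, mulVec_mulVec θ, hQ, one_mulVec, mulVec_zero]
  abel

theorem system_lift_general (R₀ Q : Mat3) (Ω₀ q π θ : Vec3)
    (hQ : IsSO3 Q) :
    R₀ * (hat (Ω₀ + q) * Q + hat (Q *ᵥ π) * Q)
      = R₀ * Q * hat (Qᵀ *ᵥ (Ω₀ + q) + π) ∧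
    hat ((hat (Ω₀ + q) * Q + hat (Q *ᵥ π) * Q)ᵀ *ᵥ (Ω₀ + q)
        + Qᵀ *ᵥ (hat (Q *ᵥ π) *ᵥ (Ω₀ + q) + Q *ᵥ θ))
      = hat θ := by
  refine ⟨?_, ?_⟩
  · rw [Matrix.mul_assoc, mul_hat_transpose_mulVec_add_of_isSO3 hQ]
  · rw [hat_mul_add_transpose_mulVec_add hQ.1]

/-- the family F is a lift of the second order attitude kinematics. -/
theorem system_lift (R₀ Q : Mat3) (Ω₀ q π θ : Vec3)
    (hR₀ : IsSO3 R₀) (hQ : IsSO3 Q) :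
    R₀ * (hat (Ω₀ + q) * Q + hat (Q *ᵥ π) * Q)
      = R₀ * Q * hat (Qᵀ *ᵥ (Ω₀ + q) + π) ∧
    hat ((hat (Ω₀ + q) * Q + hat (Q *ᵥ π) * Q)ᵀ *ᵥ (Ω₀ + q)
        + Qᵀ *ᵥ (hat (Q *ᵥ π) *ᵥ (Ω₀ + q) + Q *ᵥ θ))
      = hat θ :=
  system_lift_general R₀ Q Ω₀ q π θ hQ
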